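/- With notation as in the Hilbert–Burch parametrization, for N ∈ T_0(E) and I = φ(N), the polynomial f_t = Π_{i=1}^t (y^{d_i} + n_{ii}) generates I ∩ k[y]. Consequently, y ∈ √I if and only if n_{ii} = 0 for all i = 1,…,t. -/

import Mathlib

open MvPolynomial
open scoped Classical

noncomputable section
namespace CV

variable {k : Type*} [Field k]

/-- `R k = k[x,y]` with `x = X 0`, `y = X 1`. -/
abbrev Rk (k : Type*) [Field k] := MvPolynomial (Fin 2) k

/-- The exponent of the lex-leading term of `f` (lex order with `x > y`). -/
def ltExp (f : Rk k) : Fin 2 →₀ ℕ :=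
  if h : f = 0 then 0
  else ofLex ((f.support.image (toLex : (Fin 2 →₀ ℕ) → Lex (Fin 2 →₀ ℕ))).max'
    (Finset.image_nonempty.mpr (MvPolynomial.support_nonempty.mpr h)))

/-- Leading coefficient. -/
def lc (f : Rk k) : k := coeff (ltExp f) f

/-- Leading term. -/
def lt (f : Rk k) : Rk k := monomial (ltExp f) (lc f)

/-- The leading term ideal `Lt(I)`. -/
def ltIdeal (I : Ideal (Rk k)) : Ideal (Rk k) :=
  Ideal.span { g | ∃ f ∈ I, f ≠ 0 ∧ g = lt f }

/-- The monomial ideal `E` associated to the data `(m_0, …, m_t)`: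
`E = (x^t, x^{t-1}y^{m_1}, …, y^{m_t})`. -/
def Emon (t : ℕ) (m : Fin (t+1) → ℕ) : Ideal (Rk k) :=
  Ideal.span (Set.range fun i : Fin (t+1) => (X 0 : Rk k) ^ (t - (i : ℕ)) * X 1 ^ (m i))

/-- The matrix `M_0(E)` with `y^{d_i}` on the diagonal and `-x` on the subdiagonal. -/
def M0 (t : ℕ) (m : Fin (t+1) → ℕ) : Matrix (Fin (t+1)) (Fin t) (Rk k) :=
  fun a b =>
    if a = b.castSucc then (X 1 : Rk k) ^ (m b.succ - m b.castSucc)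
    else if a = b.succ then - X 0 else 0

/-- The signed maximal minor of `M` obtained by deleting the `(i+1)`-st row,
with sign `(-1)^{t-i}`. -/
def sminor {t : ℕ} (M : Matrix (Fin (t+1)) (Fin t) (Rk k)) (i : Fin (t+1)) : Rk k :=
  (-1) ^ (t - (i : ℕ)) * (M.submatrix i.succAbove id).det

/-- The ideal of maximal minors of a `(t+1) × t` matrix. -/
def minorsIdeal {t : ℕ} (M : Matrix (Fin (t+1)) (Fin t) (Rk k)) : Ideal (Rk k) :=
  Ideal.span (Set.range (sminor M))

/-- Inclusion `k[y] → k[x,y]`. -/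
def toY : Polynomial k →ₐ[k] Rk k := Polynomial.aeval (X 1 : Rk k)

/-- Membership in `T_0(E)`: `(t+1) × t` matrices `N = (n_{ij})` over `k[y]` with
`n_{ij} = 0` for `i < j` and `deg n_{ij} < d_j`. -/
def inT0 (t : ℕ) (m : Fin (t+1) → ℕ) (N : Matrix (Fin (t+1)) (Fin t) (Polynomial k)) : Prop :=
  ∀ (a : Fin (t+1)) (b : Fin t),
    (((a : ℕ) < (b : ℕ)) → N a b = 0) ∧
    (N a b).degree < ((m b.succ - m b.castSucc : ℕ) : WithBot ℕ)

/-- The map `φ` sending a matrix `N` to the ideal of maximal minors of `M_0(E) + N`. -/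
def phi (t : ℕ) (m : Fin (t+1) → ℕ) (N : Matrix (Fin (t+1)) (Fin t) (Polynomial k)) :
    Ideal (Rk k) :=
  minorsIdeal (M0 t m + N.map (toY : Polynomial k →ₐ[k] Rk k))

/-- A homogeneous ideal: stable under taking homogeneous components. -/
def isHomog (I : Ideal (Rk k)) : Prop :=
  ∀ f ∈ I, ∀ n : ℕ, homogeneousComponent n f ∈ I


/-- The degree-`j` graded piece of an ideal, as a `k`-subspace. -/
def Ideg (I : Ideal (Rk k)) (j : ℕ) : Submodule k (Rk k) :=
  (Submodule.restrictScalars k I) ⊓ homogeneousSubmodule (Fin 2) k j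

/-- The number of minimal generators of degree `j` of a homogeneous ideal:
`β_{0,j}(I) = dim_k I_j - dim_k ((x,y)·I)_j`. -/
def beta0 (I : Ideal (Rk k)) (j : ℕ) : ℕ :=
  Module.finrank k (Ideg I j) -
    Module.finrank k (Ideg (Ideal.span {(X 0 : Rk k), X 1} * I) j)

end CV

namespace Stmt10Aux

variable {k : Type*} [Field k]

section

variable (t : ℕ) (m : Fin (t + 1 + 1) → ℕ) (N : Matrix (Fin (t + 1 + 1)) (Fin (t + 1)) (Polynomial k))

/-- the diagonal entries `p_b = y^{d_b} + n_{bb}`. -/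
def pd (b : Fin (t + 1)) : Polynomial k :=
  Polynomial.X ^ (m b.succ - m b.castSucc) + N b.castSucc b

/-- the companion-style matrix `B` (action of `x`). -/
def Bm : Matrix (Fin (t + 1)) (Fin (t + 1)) (Polynomial k) := fun a c =>
  (if (a : ℕ) = (c : ℕ) + 1 then Polynomial.X ^ (m a.succ - m a.castSucc) else 0) + N c.succ a

def v0 : Fin (t + 1) → Polynomial k := fun a => if a = 0 then pd t m N 0 else 0

def uu (j : ℕ) : Fin (t + 1) → Polynomial k := (Bm t m N ^ j).mulVec (v0 t m N)

def KK : Submodule (Polynomial k) (Fin (t + 1) → Polynomial k) :=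
  Submodule.span (Polynomial k) (Set.range fun j : Fin (t + 1) => uu t m N (j : ℕ))

lemma uu_mem_KK (j : ℕ) (hj : j < t + 1) : uu t m N j ∈ KK t m N :=
  Submodule.subset_span ⟨⟨j, hj⟩, rfl⟩

lemma uu_succ (j : ℕ) : uu t m N (j + 1) = (Bm t m N).mulVec (uu t m N j) := by
  simp [uu, Matrix.mulVec_mulVec, pow_succ']

lemma sum_mulVec {n R : Type*} [Fintype n] [CommRing R] {ι : Type*} (s : Finset ι)
    (f : ι → Matrix n n R) (v : n → R) :
    (∑ i ∈ s, f i).mulVec v = ∑ i ∈ s, (f i).mulVec v := by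
  funext a
  simp only [Matrix.mulVec, dotProduct, Matrix.sum_apply, Finset.sum_apply,
    Finset.sum_mul]
  exact Finset.sum_comm

lemma uu_top_mem : uu t m N (t + 1) ∈ KK t m N := by
  classical
  set B := Bm t m N with hB
  have hch := Matrix.aeval_self_charpoly B
  have hdeg : B.charpoly.natDegree = t + 1 := by
    simpa using B.charpoly_natDegree_eq_dim
  rw [Polynomial.aeval_eq_sum_range, hdeg, Finset.sum_range_succ] at hch
  have hc1 : B.charpoly.coeff (t + 1) = 1 := by
    have := B.charpoly_monic
    rw [Polynomial.Monic, Polynomial.leadingCoeff, hdeg] at this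
    exact this
  rw [hc1, one_smul] at hch
  have hBt : B ^ (t + 1) = -∑ i ∈ Finset.range (t + 1), B.charpoly.coeff i • B ^ i := by
    rw [eq_neg_iff_add_eq_zero]
    exact (add_comm _ _).trans hch
  have : uu t m N (t + 1) = -∑ i ∈ Finset.range (t + 1),
      B.charpoly.coeff i • uu t m N i := by
    rw [uu, hBt, Matrix.neg_mulVec, sum_mulVec]
    congr 1
    refine Finset.sum_congr rfl fun i _ => ?_
    rw [Matrix.smul_mulVec]
    rfl
  rw [this]
  refine neg_mem (Submodule.sum_mem _ fun i hi => ?_)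
  exact Submodule.smul_mem _ _ (uu_mem_KK t m N i (Finset.mem_range.mp hi))

lemma mulVec_KK {v : Fin (t + 1) → Polynomial k} (hv : v ∈ KK t m N) :
    (Bm t m N).mulVec v ∈ KK t m N := by
  refine Submodule.span_induction ?_ ?_ ?_ ?_ hv
  · rintro _ ⟨j, rfl⟩
    rw [← uu_succ]
    rcases lt_or_eq_of_le (Nat.lt_succ_iff.mp j.isLt) with h | h
    · exact uu_mem_KK t m N _ (by omega)
    · rw [h]; exact uu_top_mem t m N
  · simp [Matrix.mulVec_zero, Submodule.zero_mem]
  · intro x y _ _ hx hy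
    rw [Matrix.mulVec_add]
    exact Submodule.add_mem _ hx hy
  · intro c x _ hx
    rw [Matrix.mulVec_smul]
    exact Submodule.smul_mem _ _ hx

lemma pow_mulVec_KK (i : ℕ) {v : Fin (t + 1) → Polynomial k} (hv : v ∈ KK t m N) :
    (Bm t m N ^ i).mulVec v ∈ KK t m N := by
  induction i with
  | zero => simpa using hv
  | succ n ih =>
      rw [pow_succ', ← Matrix.mulVec_mulVec]
      exact mulVec_KK t m N ih

lemma aeval_mulVec_KK (c : Polynomial (Polynomial k)) {v : Fin (t + 1) → Polynomial k}
    (hv : v ∈ KK t m N) : (Polynomial.aeval (Bm t m N) c).mulVec v ∈ KK t m N := by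
  induction c using Polynomial.induction_on' with
  | add p q hp hq =>
      rw [map_add, Matrix.add_mulVec]
      exact Submodule.add_mem _ hp hq
  | monomial n a =>
      rw [Polynomial.aeval_monomial, ← Matrix.mulVec_mulVec,
        Algebra.algebraMap_eq_smul_one, Matrix.smul_mulVec, Matrix.one_mulVec]
      exact Submodule.smul_mem _ _ (pow_mulVec_KK t m N n hv)

end

def Psi0 : CV.Rk k →ₐ[k] Polynomial (Polynomial k) :=
  MvPolynomial.aeval (fun i : Fin 2 => if i = 0 then Polynomial.X else Polynomial.C Polynomial.X)

lemma Psi0_toY (q : Polynomial k) : Psi0 (CV.toY q) = Polynomial.C q := by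
  have h : (Psi0 (k := k)).comp CV.toY
      = IsScalarTower.toAlgHom k (Polynomial k) (Polynomial (Polynomial k)) := by
    apply Polynomial.algHom_ext
    simp [Psi0, CV.toY, Polynomial.algebraMap_eq]
  have h2 := DFunLike.congr_fun h q
  simpa [Polynomial.algebraMap_eq] using h2

section

variable (t : ℕ) (m : Fin (t + 1 + 1) → ℕ) (N : Matrix (Fin (t + 1 + 1)) (Fin (t + 1)) (Polynomial k))

/-- the evaluation `x ↦ B`, `y ↦ Y·1`. -/
def Psi : CV.Rk k →+* Matrix (Fin (t + 1)) (Fin (t + 1)) (Polynomial k) :=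
  ((Polynomial.aeval (Bm t m N)).toRingHom :
      Polynomial (Polynomial k) →+* Matrix (Fin (t + 1)) (Fin (t + 1)) (Polynomial k)).comp
    (Psi0 (k := k)).toRingHom

lemma Psi_apply (g : CV.Rk k) :
    Psi t m N g = Polynomial.aeval (Bm t m N) (Psi0 g) := rfl

lemma Psi_toY (q : Polynomial k) :
    Psi t m N (CV.toY q) = algebraMap (Polynomial k) _ q := by
  rw [Psi_apply, Psi0_toY, Polynomial.aeval_C]

lemma Psi_X0 : Psi t m N (MvPolynomial.X 0) = Bm t m N := by
  rw [Psi_apply]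
  simp [Psi0]

lemma Psi_mulVec_KK (h : CV.Rk k) {v : Fin (t + 1) → Polynomial k}
    (hv : v ∈ KK t m N) : (Psi t m N h).mulVec v ∈ KK t m N :=
  aeval_mulVec_KK t m N _ hv

end


section
variable (t : ℕ) (m : Fin (t + 1 + 1) → ℕ) (N : Matrix (Fin (t + 1 + 1)) (Fin (t + 1)) (Polynomial k))

lemma uu_zero : uu t m N 0 = v0 t m N := by
  simp [uu, Matrix.one_mulVec]

/-- the matrix `M_0(E) + N`. -/
def Mf : Matrix (Fin (t + 1 + 1)) (Fin (t + 1)) (CV.Rk k) :=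
  CV.M0 (t + 1) m + N.map (CV.toY : Polynomial k →ₐ[k] CV.Rk k)

lemma Mf_apply (r : Fin (t + 1 + 1)) (c : Fin (t + 1)) :
    Mf t m N r c = CV.M0 (t + 1) m r c + CV.toY (N r c) := rfl

lemma Psi_entry (r : Fin (t + 1 + 1)) (c a : Fin (t + 1)) :
    (Psi t m N (Mf t m N r c)) a c =
      (if a = c then
          (if r = c.castSucc then Polynomial.X ^ (m c.succ - m c.castSucc) else 0) else 0)
      + (if r = c.succ then -(Bm t m N a c) else 0)
      + (if a = c then N r c else 0) := by
  have hcs : (c.castSucc : Fin (t + 1 + 1)) ≠ c.succ := by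
    simp [Fin.ext_iff]
  rw [Mf_apply, map_add, Matrix.add_apply, Psi_toY, CV.M0]
  have h1 : Psi t m N (if r = c.castSucc then (MvPolynomial.X 1 : CV.Rk k) ^ (m c.succ - m c.castSucc)
        else if r = c.succ then -MvPolynomial.X 0 else 0)
      = (if r = c.castSucc then
            algebraMap (Polynomial k) _ (Polynomial.X ^ (m c.succ - m c.castSucc))
          else if r = c.succ then -(Bm t m N) else 0) := by
    split_ifs with h h'
    · have hx : (MvPolynomial.X 1 : CV.Rk k) ^ (m c.succ - m c.castSucc)
          = CV.toY (Polynomial.X ^ (m c.succ - m c.castSucc)) := by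
        simp [CV.toY]
      rw [hx, Psi_toY]
    · rw [map_neg, Psi_X0]
    · exact map_zero _
  rw [h1]
  by_cases h : r = c.castSucc
  · have h' : r ≠ c.succ := by rw [h]; exact hcs
    simp only [if_pos h, if_neg h', Matrix.add_apply, Matrix.algebraMap_matrix_apply,
      Algebra.algebraMap_self, RingHom.id_apply, add_zero]
  · by_cases h' : r = c.succ
    · simp only [if_neg h, if_pos h', Matrix.add_apply, Matrix.neg_apply, ite_self, zero_add,
        Matrix.algebraMap_matrix_apply, Algebra.algebraMap_self, RingHom.id_apply]
    · simp only [if_neg h, if_neg h', Matrix.add_apply, Matrix.zero_apply, ite_self, zero_add,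
        Matrix.algebraMap_matrix_apply, Algebra.algebraMap_self, RingHom.id_apply]

lemma rowRel (hN : CV.inT0 (t + 1) m N) (r : Fin (t + 1 + 1)) :
    (fun a => ∑ c, (Psi t m N (Mf t m N r c)) a c) ∈ KK t m N := by
  have hsum : ∀ a, (∑ c, (Psi t m N (Mf t m N r c)) a c)
      = (if r = a.castSucc then Polynomial.X ^ (m a.succ - m a.castSucc) else 0)
        + (∑ c, if r = c.succ then -(Bm t m N a c) else 0)
        + N r a := by
    intro a
    rw [Finset.sum_congr rfl fun c _ => Psi_entry t m N r c a]
    rw [Finset.sum_add_distrib, Finset.sum_add_distrib]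
    congr 1
    · congr 1
      rw [Finset.sum_ite_eq]
      simp
    · rw [Finset.sum_ite_eq]
      simp
  induction r using Fin.cases with
  | zero =>
      have : (fun a => ∑ c, (Psi t m N (Mf t m N 0 c)) a c) = uu t m N 0 := by
        funext a
        rw [hsum a, uu_zero]
        have h2 : (∑ c : Fin (t + 1), if (0 : Fin (t + 1 + 1)) = c.succ
            then -(Bm t m N a c) else 0) = 0 :=
          Finset.sum_eq_zero fun c _ => by simp [(Fin.succ_ne_zero c).symm]
        rw [h2, add_zero]
        by_cases ha : a = 0
        · subst ha
          simp [v0, pd, Fin.castSucc_zero]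
        · have h3 : (0 : Fin (t + 1 + 1)) ≠ a.castSucc := by
            intro h; exact ha (Fin.ext (by simp only [Fin.ext_iff, Fin.val_zero, Fin.coe_castSucc] at h ⊢; omega))
          have h4 : N 0 a = 0 := (hN 0 a).1 (by
            simpa using Nat.pos_of_ne_zero (fun hh => ha (Fin.ext hh)))
          simp [h3, h4, v0, ha]
      rw [this]
      exact uu_mem_KK t m N 0 (by omega)
  | succ c' =>
      have : (fun a => ∑ c, (Psi t m N (Mf t m N c'.succ c)) a c) = 0 := by
        funext a
        rw [Pi.zero_apply, hsum a]
        have h2 : (∑ c : Fin (t + 1), if c'.succ = c.succ then -(Bm t m N a c) else 0)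
            = -(Bm t m N a c') := by
          simp only [Fin.succ_inj]
          rw [Finset.sum_ite_eq]
          simp
        rw [h2]
        have hcond : (c'.succ = a.castSucc) ↔ ((a : ℕ) = (c' : ℕ) + 1) := by
          rw [Fin.ext_iff]
          simp [eq_comm]
        simp only [Bm]
        by_cases h : (a : ℕ) = (c' : ℕ) + 1
        · rw [if_pos (hcond.mpr h), if_pos h]
          ring
        · rw [if_neg (fun hh => h (hcond.mp hh)), if_neg h]
          ring
      rw [this]
      exact Submodule.zero_mem _

def pdN (i : ℕ) : Polynomial k := if h : i < t + 1 then pd t m N ⟨i, h⟩ else 1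

lemma uu_tri (hN : CV.inT0 (t + 1) m N) :
    ∀ jn : ℕ, jn < t + 1 →
      (∀ a : Fin (t + 1), jn < (a : ℕ) → uu t m N jn a = 0) ∧
      (∀ h : jn < t + 1, uu t m N jn ⟨jn, h⟩
          = ∏ i ∈ Finset.range (jn + 1), pdN t m N i) := by
  intro jn
  induction jn with
  | zero =>
      intro _
      constructor
      · intro a ha
        rw [uu_zero]
        have : a ≠ 0 := fun h => by simp [h] at ha
        simp [v0, this]
      · intro h
        rw [uu_zero]
        have h0 : (⟨0, h⟩ : Fin (t + 1)) = 0 := rfl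
        simp [v0, pdN, h0]
  | succ jn ih =>
      intro hjn1
      have hjn : jn < t + 1 := by omega
      obtain ⟨ih0, ih1⟩ := ih hjn
      have hstep : uu t m N (jn + 1) = (Bm t m N).mulVec (uu t m N jn) := uu_succ t m N jn
      have hmv : ∀ a, (Bm t m N).mulVec (uu t m N jn) a
          = ∑ c, Bm t m N a c * uu t m N jn c := fun a => rfl
      constructor
      · intro a ha
        rw [hstep, hmv]
        refine Finset.sum_eq_zero fun c _ => ?_
        by_cases hc : (c : ℕ) ≤ jn
        · have hB0 : Bm t m N a c = 0 := by
            have h1 : ¬((a : ℕ) = (c : ℕ) + 1) := by omega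
            have h2 : N c.succ a = 0 := (hN c.succ a).1 (by simp [Fin.val_succ]; omega)
            simp [Bm, h1, h2]
          rw [hB0, zero_mul]
        · rw [ih0 c (by omega), mul_zero]
      · intro h
        rw [hstep, hmv]
        rw [Finset.sum_eq_single (⟨jn, by omega⟩ : Fin (t + 1))]
        · have hBd : Bm t m N ⟨jn + 1, h⟩ ⟨jn, by omega⟩ = pd t m N ⟨jn + 1, h⟩ := by
            have hNeq : N (⟨jn, by omega⟩ : Fin (t + 1)).succ (⟨jn + 1, h⟩ : Fin (t + 1))
                = N (⟨jn + 1, h⟩ : Fin (t + 1)).castSucc ⟨jn + 1, h⟩ := by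
              congr 1 <;> exact Fin.ext rfl
            simp [Bm, pd, hNeq]
          rw [hBd, ih1 hjn]
          have hpdN : pdN t m N (jn + 1) = pd t m N ⟨jn + 1, h⟩ := dif_pos h
          rw [Finset.prod_range_succ (f := pdN t m N) (n := jn + 1), hpdN, mul_comm]
        · intro c _ hcne
          by_cases hc : (c : ℕ) ≤ jn
          · have hclt : (c : ℕ) < jn := by
              rcases Nat.lt_or_ge (c : ℕ) jn with h' | h'
              · exact h'
              · exact absurd (Fin.ext (show (c : ℕ) = jn by omega) : c = ⟨jn, by omega⟩) hcne
            have hB0 : Bm t m N ⟨jn + 1, h⟩ c = 0 := by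
              have h1 : ¬(((⟨jn + 1, h⟩ : Fin (t + 1)) : ℕ) = (c : ℕ) + 1) := by
                simp; omega
              have h2 : N c.succ ⟨jn + 1, h⟩ = 0 := (hN c.succ ⟨jn + 1, h⟩).1 (by
                simp [Fin.val_succ]; omega)
              simp [Bm, h1, h2]; omega
            rw [hB0, zero_mul]
          · rw [ih0 c (by omega), mul_zero]
        · intro hmem
          exact absurd (Finset.mem_univ _) hmem

def Jgood : Ideal (CV.Rk k) where
  carrier := {h | ∀ b : Fin (t + 1), (fun a => Psi t m N h a b) ∈ KK t m N}
  add_mem' := by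
    intro x y hx hy b
    have heq : (fun a => Psi t m N (x + y) a b)
        = (fun a => Psi t m N x a b) + fun a => Psi t m N y a b := by
      funext a
      simp [map_add, Matrix.add_apply]
    show (fun a => Psi t m N (x + y) a b) ∈ KK t m N
    rw [heq]
    exact Submodule.add_mem _ (hx b) (hy b)
  zero_mem' := by
    intro b
    have heq : (fun a => Psi t m N (0 : CV.Rk k) a b) = 0 := by
      funext a; simp
    show (fun a => Psi t m N (0 : CV.Rk k) a b) ∈ KK t m N
    rw [heq]
    exact Submodule.zero_mem _
  smul_mem' := by
    intro c x hx b
    have heq : (fun a => Psi t m N (c • x) a b)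
        = (Psi t m N c).mulVec (fun e => Psi t m N x e b) := by
      funext a
      simp [smul_eq_mul, map_mul, Matrix.mul_apply, Matrix.mulVec, dotProduct]
    show (fun a => Psi t m N (c • x) a b) ∈ KK t m N
    rw [heq]
    exact Psi_mulVec_KK t m N c (hx b)

lemma det_mem_KK (hN : CV.inT0 (t + 1) m N) (i : Fin (t + 1 + 1)) (b : Fin (t + 1)) :
    (fun a => Psi t m N (((Mf t m N).submatrix i.succAbove id).det) a b)
      ∈ KK t m N := by
  classical
  set Q := (Mf t m N).submatrix i.succAbove id with hQ
  set Q' := Q.map (Psi0 (k := k)) with hQ'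
  set B := Bm t m N with hB
  have hdet : Psi t m N Q.det = Polynomial.aeval B Q'.det := by
    rw [Psi_apply]
    congr 1
    exact (Psi0 (k := k)).toRingHom.map_det Q
  set W : Fin (t + 1) → (Fin (t + 1) → Polynomial k) :=
    fun e => fun a => ∑ c, (Polynomial.aeval B (Q' e c)) a c with hW
  have hWmem : ∀ e, W e ∈ KK t m N := by
    intro e
    have : W e = fun a => ∑ c, (Psi t m N (Mf t m N (i.succAbove e) c)) a c := rfl
    rw [this]
    exact rowRel t m N hN (i.succAbove e)
  have hiden : (fun a => (Polynomial.aeval B Q'.det) a b)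
      = ∑ e, (Polynomial.aeval B (Q'.adjugate b e)).mulVec (W e) := by
    funext a
    have step1 : (∑ e, (Polynomial.aeval B (Q'.adjugate b e)).mulVec (W e)) a
        = ∑ e, ∑ c, ∑ x, (Polynomial.aeval B (Q'.adjugate b e)) a x
            * (Polynomial.aeval B (Q' e c)) x c := by
      rw [Finset.sum_apply]
      refine Finset.sum_congr rfl fun e _ => ?_
      show ∑ x, (Polynomial.aeval B (Q'.adjugate b e)) a x * W e x = _
      rw [Finset.sum_congr rfl fun x _ => by rw [hW]]
      rw [Finset.sum_congr rfl fun x _ => Finset.mul_sum _ _ _]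
      exact Finset.sum_comm
    rw [step1]
    have step2 : ∀ e c, (∑ x, (Polynomial.aeval B (Q'.adjugate b e)) a x
            * (Polynomial.aeval B (Q' e c)) x c)
        = (Polynomial.aeval B (Q'.adjugate b e * Q' e c)) a c := by
      intro e c
      rw [map_mul]
      exact (Matrix.mul_apply).symm
    rw [Finset.sum_congr rfl fun e _ => Finset.sum_congr rfl fun c _ => step2 e c]
    rw [Finset.sum_comm]
    have step3 : ∀ c, (∑ e, (Polynomial.aeval B (Q'.adjugate b e * Q' e c)) a c)
        = (Polynomial.aeval B ((Q'.adjugate * Q') b c)) a c := by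
      intro c
      rw [Matrix.mul_apply, map_sum]
      rw [Matrix.sum_apply]
    rw [Finset.sum_congr rfl fun c _ => step3 c]
    rw [Matrix.adjugate_mul]
    have step4 : ∀ c : Fin (t + 1), (Polynomial.aeval B ((Q'.det • (1 : Matrix (Fin (t + 1))
          (Fin (t + 1)) (Polynomial (Polynomial k)))) b c)) a c
        = if b = c then (Polynomial.aeval B Q'.det) a c else 0 := by
      intro c
      rw [Matrix.smul_apply, Matrix.one_apply, smul_eq_mul, mul_ite, mul_one, mul_zero]
      rw [apply_ite (Polynomial.aeval B), map_zero]
      split_ifs <;> simp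
    rw [Finset.sum_congr rfl fun c _ => step4 c]
    rw [Finset.sum_ite_eq]
    simp
  rw [hdet, hiden]
  exact Submodule.sum_mem _ fun e _ => aeval_mulVec_KK t m N _ (hWmem e)

lemma key (hN : CV.inT0 (t + 1) m N) (g : Polynomial k)
    (hg : CV.toY g ∈ CV.phi (t + 1) m N) :
    (∏ b : Fin (t + 1), (Polynomial.X ^ (m b.succ - m b.castSucc) + N b.castSucc b)) ∣ g := by
  classical
  have hsub : CV.phi (t + 1) m N ≤ Jgood t m N := by
    rw [CV.phi, CV.minorsIdeal, Ideal.span_le]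
    rintro _ ⟨i, rfl⟩
    show ∀ b : Fin (t + 1), _ ∈ KK t m N
    intro b
    rw [CV.sminor]
    show (fun a => Psi t m N ((-1 : CV.Rk k) ^ (t + 1 - (i : ℕ))
      * (((Mf t m N).submatrix i.succAbove id).det)) a b) ∈ KK t m N
    have heq : (fun a => Psi t m N ((-1 : CV.Rk k) ^ (t + 1 - (i : ℕ))
          * (((Mf t m N).submatrix i.succAbove id).det)) a b)
        = (Psi t m N ((-1 : CV.Rk k) ^ (t + 1 - (i : ℕ)))).mulVec
            (fun e => Psi t m N ((((Mf t m N)).submatrix i.succAbove id).det) e b) := by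
      funext a
      simp [map_mul, Matrix.mul_apply, Matrix.mulVec, dotProduct]
    rw [heq]
    exact Psi_mulVec_KK t m N _ (det_mem_KK t m N hN i b)
  have hcol := hsub hg (Fin.last t)
  have hcoleq : (fun a => Psi t m N (CV.toY g) a (Fin.last t))
      = fun a => if a = Fin.last t then g else 0 := by
    funext a
    rw [Psi_toY]
    simp [Matrix.algebraMap_matrix_apply]
  rw [hcoleq] at hcol
  rw [KK, Submodule.mem_span_range_iff_exists_fun] at hcol
  obtain ⟨cf, hcf⟩ := hcol
  have hval := congrFun hcf (Fin.last t)
  rw [Finset.sum_apply] at hval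
  simp only [Pi.smul_apply, smul_eq_mul, if_pos rfl] at hval
  rw [Finset.sum_eq_single (Fin.last t)] at hval
  · have hlast : uu t m N ((Fin.last t : Fin (t + 1)) : ℕ) (Fin.last t)
        = ∏ b : Fin (t + 1), (Polynomial.X ^ (m b.succ - m b.castSucc) + N b.castSucc b) := by
      have h1 := (uu_tri t m N hN t (by omega)).2 (by omega)
      have h2 : (⟨t, by omega⟩ : Fin (t + 1)) = Fin.last t := rfl
      rw [h2] at h1
      have h3 : (∏ i ∈ Finset.range (t + 1), pdN t m N i)
          = ∏ b : Fin (t + 1), pd t m N b := by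
        rw [← Fin.prod_univ_eq_prod_range (fun i => pdN t m N i) (t + 1)]
        refine Finset.prod_congr rfl fun b _ => ?_
        rw [pdN, dif_pos b.isLt]
      have h4 : ((Fin.last t : Fin (t + 1)) : ℕ) = t := rfl
      rw [h4, h1, h3]
      rfl
    rw [hlast] at hval
    exact ⟨cf (Fin.last t), by rw [mul_comm]; exact hval.symm⟩
  · intro j _ hj
    have hjlt : (j : ℕ) < t := by
      have := j.isLt
      rcases Nat.lt_or_ge (j : ℕ) t with h' | h'
      · exact h'
      · exact absurd (Fin.ext (by simp; omega) : j = Fin.last t) hj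
    rw [(uu_tri t m N hN (j : ℕ) (by omega)).1 (Fin.last t) (by simpa using hjlt)]
    simp
  · intro hmem
    exact absurd (Finset.mem_univ _) hmem

end

lemma part1 {t : ℕ} (m : Fin (t + 1) → ℕ) (N : Matrix (Fin (t + 1)) (Fin t) (Polynomial k))
    (hN : CV.inT0 t m N) :
    CV.sminor (CV.M0 t m + N.map (CV.toY : Polynomial k →ₐ[k] CV.Rk k)) (Fin.last t)
      = CV.toY (∏ b : Fin t, (Polynomial.X ^ (m b.succ - m b.castSucc) + N b.castSucc b)) := by
  rw [CV.sminor]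
  have h0 : t - ((Fin.last t : Fin (t + 1)) : ℕ) = 0 := by simp
  rw [h0, pow_zero, one_mul, Fin.succAbove_last]
  rw [Matrix.det_of_lowerTriangular _ ?ltri]
  case ltri =>
    intro i j hij
    have hij' : (i : Fin t) < j := hij
    rw [Matrix.submatrix_apply, Matrix.add_apply, Matrix.map_apply, CV.M0]
    have h1 : (i.castSucc : Fin (t + 1)) ≠ j.castSucc := by
      simp [Fin.ext_iff]; omega
    have h2 : (i.castSucc : Fin (t + 1)) ≠ j.succ := by
      simp [Fin.ext_iff]; omega
    have h3 : N i.castSucc j = 0 := (hN i.castSucc j).1 (by simpa using hij')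
    simp [h1, h2, h3]
  rw [map_prod]
  refine Finset.prod_congr rfl fun b _ => ?_
  rw [Matrix.submatrix_apply, Matrix.add_apply, Matrix.map_apply, CV.M0]
  simp [CV.toY]


lemma assemble {t : ℕ} (m : Fin (t + 1) → ℕ) (N : Matrix (Fin (t + 1)) (Fin t) (Polynomial k))
    (hN : CV.inT0 t m N)
    (hkey : ∀ g : Polynomial k, CV.toY g ∈ CV.phi t m N →
      (∏ b : Fin t, (Polynomial.X ^ (m b.succ - m b.castSucc) + N b.castSucc b)) ∣ g) :
    CV.sminor (CV.M0 (k := k) t m + N.map (CV.toY : Polynomial k →ₐ[k] CV.Rk k)) (Fin.last t)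
        = CV.toY (∏ b : Fin t, (Polynomial.X ^ (m b.succ - m b.castSucc) + N b.castSucc b)) ∧
    (∀ g : Polynomial k, CV.toY g ∈ CV.phi t m N ↔
      (∏ b : Fin t, (Polynomial.X ^ (m b.succ - m b.castSucc) + N b.castSucc b)) ∣ g) ∧
    ((MvPolynomial.X 1 : CV.Rk k) ∈ (CV.phi t m N).radical ↔
      ∀ b : Fin t, N b.castSucc b = 0) := by
  have hFmem : CV.toY (∏ b : Fin t,
      (Polynomial.X ^ (m b.succ - m b.castSucc) + N b.castSucc b)) ∈ CV.phi t m N := by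
    rw [← part1 m N hN]
    exact Ideal.subset_span ⟨Fin.last t, rfl⟩
  have h2 : ∀ g : Polynomial k, CV.toY g ∈ CV.phi t m N ↔
      (∏ b : Fin t, (Polynomial.X ^ (m b.succ - m b.castSucc) + N b.castSucc b)) ∣ g := by
    intro g
    constructor
    · exact hkey g
    · rintro ⟨q, rfl⟩
      rw [map_mul]
      exact Ideal.mul_mem_right _ _ hFmem
  refine ⟨part1 m N hN, h2, ?_, ?_⟩
  · intro hy b
    obtain ⟨n, hn⟩ := Ideal.mem_radical_iff.mp hy
    have hxn : CV.toY (Polynomial.X ^ n) ∈ CV.phi t m N := by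
      simpa [CV.toY] using hn
    have hdvd := (h2 _).mp hxn
    have hb : (Polynomial.X ^ (m b.succ - m b.castSucc) + N b.castSucc b) ∣ Polynomial.X ^ n :=
      dvd_trans (Finset.dvd_prod_of_mem
        (fun b : Fin t => Polynomial.X ^ (m b.succ - m b.castSucc) + N b.castSucc b)
        (Finset.mem_univ b)) hdvd
    rcases Nat.eq_zero_or_pos (m b.succ - m b.castSucc) with hd | hd
    · have hdeg := (hN b.castSucc b).2
      rw [hd] at hdeg
      have hbot : (N b.castSucc b).degree = ⊥ :=
        Nat.WithBot.lt_zero_iff.mp (by exact_mod_cast hdeg)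
      exact Polynomial.degree_eq_bot.mp hbot
    · obtain ⟨i, _, hassoc⟩ := (dvd_prime_pow Polynomial.prime_X n).mp hb
      obtain ⟨u, hu⟩ := hassoc
      obtain ⟨cu, hcu_unit, hcu⟩ := Polynomial.isUnit_iff.mp u.isUnit
      set d := m b.succ - m b.castSucc with hdd
      set nb := N b.castSucc b with hnb
      have hC : (Polynomial.X ^ d + nb) * Polynomial.C cu = Polynomial.X ^ i := by
        rw [hcu]; exact hu
      have hnbd : nb.coeff d = 0 :=
        Polynomial.coeff_eq_zero_of_degree_lt (hN b.castSucc b).2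
      have hL : Polynomial.coeff ((Polynomial.X ^ d + nb) * Polynomial.C cu) d = cu := by
        rw [Polynomial.coeff_mul_C, Polynomial.coeff_add, Polynomial.coeff_X_pow,
          if_pos rfl, hnbd, add_zero, one_mul]
      have hco : cu = if d = i then 1 else 0 := by
        rw [← hL, hC, Polynomial.coeff_X_pow]
      have hdi : d = i := by
        by_contra hne
        rw [if_neg hne] at hco
        exact hcu_unit.ne_zero hco
      rw [if_pos hdi] at hco
      rw [hco, map_one, mul_one] at hC
      have h5 : Polynomial.X ^ d + nb = Polynomial.X ^ d := by rw [hC, hdi]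
      have h6 := congrArg (fun p => p - Polynomial.X ^ d) h5
      simpa [add_sub_cancel_left] using h6
  · intro hz
    have hF : (∏ b : Fin t, (Polynomial.X ^ (m b.succ - m b.castSucc) + N b.castSucc b))
        = Polynomial.X ^ (∑ b : Fin t, (m b.succ - m b.castSucc)) := by
      rw [Finset.prod_congr rfl fun b _ => by rw [hz b, add_zero]]
      exact Finset.prod_pow_eq_pow_sum _ _ _
    refine Ideal.mem_radical_iff.mpr ⟨∑ b : Fin t, (m b.succ - m b.castSucc), ?_⟩
    have hmem := hFmem
    rw [hF] at hmem
    simpa [CV.toY] using hmem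

end Stmt10Aux


open CV

/-- `f_t = Π (y^{d_i} + n_{ii})` generates `I ∩ k[y]`, and `y ∈ √I` iff
all diagonal entries `n_{ii}` vanish. -/
theorem stmt_10 (k : Type*) [Field k] (t : ℕ) (m : Fin (t + 1) → ℕ) (h0 : m 0 = 0)
    (hmono : Monotone m) (hpos : ∀ i : Fin (t + 1), i ≠ 0 → 0 < m i)
    (N : Matrix (Fin (t + 1)) (Fin t) (Polynomial k)) (hN : CV.inT0 t m N) :
    let I := CV.phi (k := k) t m N
    let F : Polynomial k :=
      ∏ b : Fin t, (Polynomial.X ^ (m b.succ - m b.castSucc) + N b.castSucc b)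
    CV.sminor (CV.M0 (k := k) t m + N.map (CV.toY : Polynomial k →ₐ[k] CV.Rk k))
        (Fin.last t) = CV.toY F ∧
    (∀ g : Polynomial k, CV.toY g ∈ I ↔ F ∣ g) ∧
    ((X 1 : CV.Rk k) ∈ I.radical ↔ ∀ b : Fin t, N b.castSucc b = 0) := by
  cases t with
  | zero =>
      intro I F
      refine Stmt10Aux.assemble m N hN fun g _ => ?_
      rw [show (∏ b : Fin 0, (Polynomial.X ^ (m b.succ - m b.castSucc) + N b.castSucc b))
        = (1 : Polynomial k) from by simp]
      exact one_dvd g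
  | succ s =>
      intro I F
      obtain ⟨p1, p2, p3⟩ := Stmt10Aux.assemble m N hN (Stmt10Aux.key s m N hN)
      exact ⟨p1, p2, p3⟩
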